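/- arXiv:1702.01173 — 5 statements merged into one kernel-verified Lean document; each statement's English description precedes it below -/
import Mathlib

section
/- Let n ≥ 2 and d ≥ 1, and let φ be a ℂ-algebra automorphism of the invariant ring ℂ[x_1,…,x_n]^{μ_d}. Then for all i ≠ j the polynomials φ(x_i^d) and φ(x_j^d) are coprime in ℂ[x_1,…,x_n], i.e. every common divisor of φ(x_i^d) and φ(x_j^d) in ℂ[x_1,…,x_n] is a nonzero constant. -/
open MvPolynomial

/-- The action of a scalar `ζ` on `ℂ[x_1,…,x_n]` scaling all variables simultaneously,
`f ↦ f(ζx_1,…,ζx_n)`. -/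
noncomputable def scaleAct (n : ℕ) (ζ : ℂ) :
    MvPolynomial (Fin n) ℂ →ₐ[ℂ] MvPolynomial (Fin n) ℂ :=
  aeval (fun i => C ζ * X i)

/-- The invariant ring `R = ℂ[x_1,…,x_n]^{μ_d}`. -/
noncomputable def invRing (n d : ℕ) : Subalgebra ℂ (MvPolynomial (Fin n) ℂ) where
  carrier := {f | ∀ ζ : ℂ, ζ ^ d = 1 → scaleAct n ζ f = f}
  mul_mem' := fun hf hg ζ hζ => by rw [map_mul, hf ζ hζ, hg ζ hζ]
  add_mem' := fun hf hg ζ hζ => by rw [map_add, hf ζ hζ, hg ζ hζ]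
  algebraMap_mem' := fun c ζ hζ => (scaleAct n ζ).commutes c

theorem X_pow_mem (n d : ℕ) (i : Fin n) :
    (X i : MvPolynomial (Fin n) ℂ) ^ d ∈ invRing n d := by
  intro ζ hζ
  simp [scaleAct, mul_pow, ← C_pow, hζ]

/-!
The orbit product `N(p) = ∏_{ζ ∈ μ_d} p(ζx)` of a common divisor `p` of `φ(x_i^d)` and
`φ(x_j^d)` is invariant and divides suitable powers of both in the invariant ring `R`. Pulling
back along `φ`, `φ⁻¹(N(p))` divides powers of `x_i^d` and `x_j^d` in `R`, hence in `ℂ[x]`, where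
the only such common divisors are units. So `N(p)` is a unit, and so is its factor `p`.
-/

theorem MvPolynomial.isUnit_of_dvd_X_pow_of_dvd_X_pow {σ R : Type*} [CommRing R] [IsDomain R]
    {i j : σ} (hij : i ≠ j) {w : MvPolynomial σ R} {a b : ℕ}
    (hi : w ∣ X i ^ a) (hj : w ∣ X j ^ b) : IsUnit w := by
  obtain ⟨k, -, hk⟩ := (dvd_prime_pow X_prime a).1 hi
  rcases Nat.eq_zero_or_pos k with rfl | hk0
  · simpa using hk.isUnit_iff.2
  · have hXj : (X i : MvPolynomial σ R) ∣ X j ^ b :=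
      (dvd_pow_self _ hk0.ne').trans (hk.symm.dvd.trans hj)
    exact absurd (X_dvd_X.1 (X_prime.dvd_of_dvd_pow hXj)) hij

theorem Subalgebra.isUnit_of_isUnit_coe {σ K : Type*} [Field K]
    (R : Subalgebra K (MvPolynomial σ K)) {w : R} (hw : IsUnit (w : MvPolynomial σ K)) :
    IsUnit w := by
  obtain ⟨c, hc, hwc⟩ := isUnit_iff_eq_C_of_isReduced.1 hw
  have : w = algebraMap K R c := Subtype.ext hwc
  exact this ▸ hc.map _

section scaleAct

variable {n : ℕ}

theorem scaleAct_X (ζ : ℂ) (k : Fin n) : scaleAct n ζ (X k) = C ζ * X k := by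
  simp [scaleAct]

theorem scaleAct_C (ζ c : ℂ) : scaleAct n ζ (C c) = C c :=
  (scaleAct n ζ).commutes c

theorem scaleAct_scaleAct (a b : ℂ) (f : MvPolynomial (Fin n) ℂ) :
    scaleAct n a (scaleAct n b f) = scaleAct n (a * b) f := by
  suffices (scaleAct n a).comp (scaleAct n b) = scaleAct n (a * b) from
    AlgHom.congr_fun this f
  refine algHom_ext fun k => ?_
  simp only [AlgHom.comp_apply, scaleAct_X, map_mul, scaleAct_C]
  ring

theorem scaleAct_one : scaleAct n 1 = AlgHom.id ℂ (MvPolynomial (Fin n) ℂ) :=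
  algHom_ext fun k => by simp [scaleAct_X]

theorem scaleAct_injective {ζ : ℂ} (hζ : ζ ≠ 0) : Function.Injective (scaleAct n ζ) :=
  Function.LeftInverse.injective (g := scaleAct n ζ⁻¹) fun f => by
    rw [scaleAct_scaleAct, inv_mul_cancel₀ hζ, scaleAct_one, AlgHom.id_apply]

end scaleAct

section invRing

variable {n d : ℕ}

theorem invRing.dvd_of_coe_dvd {f g : invRing n d} (hf : f ≠ 0)
    (hfg : (f : MvPolynomial (Fin n) ℂ) ∣ g) : f ∣ g := by
  obtain ⟨h, hgh⟩ := hfg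
  have hf' : (f : MvPolynomial (Fin n) ℂ) ≠ 0 := fun h0 => hf (Subtype.ext h0)
  have hh : h ∈ invRing n d := fun ζ hζ => mul_left_cancel₀ hf' <|
    calc (f : MvPolynomial (Fin n) ℂ) * scaleAct n ζ h = scaleAct n ζ (f * h) := by
          rw [map_mul, f.2 ζ hζ]
      _ = f * h := by rw [← hgh, g.2 ζ hζ]
  exact ⟨⟨h, hh⟩, Subtype.ext hgh⟩

theorem invRing.isUnit_of_dvd_X_pow {i j : Fin n} (hij : i ≠ j) (m : ℕ) {w : invRing n d}
    (hi : w ∣ ⟨X i ^ d, X_pow_mem n d i⟩ ^ m) (hj : w ∣ ⟨X j ^ d, X_pow_mem n d j⟩ ^ m) :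
    IsUnit w := by
  refine (invRing n d).isUnit_of_isUnit_coe (isUnit_of_dvd_X_pow_of_dvd_X_pow hij
    (a := d * m) (b := d * m) ?_ ?_)
  · simpa [pow_mul] using map_dvd (invRing n d).val hi
  · simpa [pow_mul] using map_dvd (invRing n d).val hj

noncomputable def orbitProd (n d : ℕ) (p : MvPolynomial (Fin n) ℂ) : MvPolynomial (Fin n) ℂ :=
  ∏ ζ ∈ Polynomial.nthRootsFinset d (1 : ℂ), scaleAct n ζ p

theorem orbitProd_mem_invRing (hd : 0 < d) (p : MvPolynomial (Fin n) ℂ) :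
    orbitProd n d p ∈ invRing n d := by
  intro η hη
  have hη0 : η ≠ 0 := by rintro rfl; simp [hd.ne'] at hη
  rw [orbitProd, map_prod]
  refine Finset.prod_equiv (Equiv.mulLeft₀ η hη0) (fun ζ => ?_)
    (fun ζ _ => scaleAct_scaleAct _ _ _)
  simp [Polynomial.mem_nthRootsFinset hd, mul_pow, hη]

theorem dvd_orbitProd (hd : 0 < d) (p : MvPolynomial (Fin n) ℂ) : p ∣ orbitProd n d p := by
  simpa [orbitProd, scaleAct_one] using
    Finset.dvd_prod_of_mem (scaleAct n · p) (Polynomial.one_mem_nthRootsFinset hd)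

theorem orbitProd_ne_zero {p : MvPolynomial (Fin n) ℂ} (hp : p ≠ 0) : orbitProd n d p ≠ 0 :=
  Finset.prod_ne_zero_iff.2 fun _ hζ => (map_ne_zero_iff _ (scaleAct_injective
    (Polynomial.ne_zero_of_mem_nthRootsFinset one_ne_zero hζ))).2 hp

theorem orbitProd_dvd_pow (hd : 0 < d) {p F : MvPolynomial (Fin n) ℂ} (hF : F ∈ invRing n d)
    (hpF : p ∣ F) : orbitProd n d p ∣ F ^ (Polynomial.nthRootsFinset d (1 : ℂ)).card := by
  rw [← Finset.prod_const, ← Finset.prod_congr rfl fun ζ hζ =>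
    hF ζ ((Polynomial.mem_nthRootsFinset hd 1).1 hζ)]
  exact Finset.prod_dvd_prod_of_dvd _ _ fun ζ _ => map_dvd _ hpF

end invRing

theorem coprime_of_invRing_automorphism_general (n d : ℕ) (hd : 1 ≤ d)
    (φ : invRing n d ≃ₐ[ℂ] invRing n d) (i j : Fin n) (hij : i ≠ j)
    (p : MvPolynomial (Fin n) ℂ)
    (hpi : p ∣ (φ ⟨X i ^ d, X_pow_mem n d i⟩ : MvPolynomial (Fin n) ℂ))
    (hpj : p ∣ (φ ⟨X j ^ d, X_pow_mem n d j⟩ : MvPolynomial (Fin n) ℂ)) :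
    ∃ c : ℂ, c ≠ 0 ∧ p = C c := by
  set U : invRing n d := ⟨X i ^ d, X_pow_mem n d i⟩
  set V : invRing n d := ⟨X j ^ d, X_pow_mem n d j⟩
  have hp : p ≠ 0 := by
    rintro rfl
    have hU : U ≠ 0 := fun h => X_ne_zero i (pow_eq_zero_iff (by omega) |>.1 congr($h.1))
    exact (map_ne_zero_iff φ φ.injective).2 hU (Subtype.ext (zero_dvd_iff.1 hpi))
  set N : invRing n d := ⟨orbitProd n d p, orbitProd_mem_invRing hd p⟩
  have hN : N ≠ 0 := fun h => orbitProd_ne_zero hp congr($h.1)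
  set m := (Polynomial.nthRootsFinset d (1 : ℂ)).card
  have hNU : N ∣ φ U ^ m :=
    invRing.dvd_of_coe_dvd hN (by simpa using orbitProd_dvd_pow hd (φ U).2 hpi)
  have hNV : N ∣ φ V ^ m :=
    invRing.dvd_of_coe_dvd hN (by simpa using orbitProd_dvd_pow hd (φ V).2 hpj)
  have hunit : IsUnit (φ.symm N) := invRing.isUnit_of_dvd_X_pow hij m
    (by simpa only [map_pow, φ.symm_apply_apply] using map_dvd φ.symm hNU)
    (by simpa only [map_pow, φ.symm_apply_apply] using map_dvd φ.symm hNV)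
  have hN_unit : IsUnit (orbitProd n d p) := by
    simpa [N] using (hunit.map φ).map (invRing n d).val
  obtain ⟨c, hc, rfl⟩ :=
    isUnit_iff_eq_C_of_isReduced.1 (isUnit_of_dvd_unit (dvd_orbitProd hd p) hN_unit)
  exact ⟨c, hc.ne_zero, rfl⟩

/-- for a `ℂ`-algebra automorphism `φ` of `ℂ[x_1,…,x_n]^{μ_d}` and `i ≠ j`,
the polynomials `φ(x_i^d)` and `φ(x_j^d)` are coprime in `ℂ[x_1,…,x_n]`: every common
divisor is a nonzero constant. -/
theorem coprime_of_invRing_automorphism (n d : ℕ) (hn : 2 ≤ n) (hd : 1 ≤ d)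
    (φ : invRing n d ≃ₐ[ℂ] invRing n d) (i j : Fin n) (hij : i ≠ j)
    (p : MvPolynomial (Fin n) ℂ)
    (hpi : p ∣ (φ ⟨X i ^ d, X_pow_mem n d i⟩ : MvPolynomial (Fin n) ℂ))
    (hpj : p ∣ (φ ⟨X j ^ d, X_pow_mem n d j⟩ : MvPolynomial (Fin n) ℂ)) :
    ∃ c : ℂ, c ≠ 0 ∧ p = C c :=
  coprime_of_invRing_automorphism_general n d hd φ i j hij p hpi hpj
end

section
/- Let n ≥ 2 and d ≥ 1, and let ψ be a ℂ-algebra automorphism of ℂ[x_1,…,x_n] that commutes with the μ_d-action and fixes every element of the invariant ring ℂ[x_1,…,x_n]^{μ_d}. Then there exists ζ ∈ ℂ with ζ^d = 1 such that ψ(x_i) = ζ·x_i for all i = 1,…,n. -/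
open MvPolynomial

/-!
Since `X i ^ d` is invariant, `ψ (X i) ^ d = X i ^ d`; as `X i` is prime,
`ψ (X i) = C (a i) * X i` with `a i ^ d = 1`. The invariant monomial `X i ^ (d - 1) * X j`
is then multiplied by `a i ^ (d - 1) * a j`, which must be
`1 = a i ^ (d - 1) * a i`, so all `a i` agree.
-/

namespace MvPolynomial

theorem eq_C_mul_X_of_pow_eq_X_pow {σ R : Type*} [CommRing R] [IsDomain R]
    {p : MvPolynomial σ R} {i : σ} {d : ℕ} (hd : d ≠ 0) (h : p ^ d = X i ^ d) :
    ∃ a : R, a ^ d = 1 ∧ p = C a * X i := by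
  obtain ⟨q, rfl⟩ : X i ∣ p := X_prime.dvd_of_dvd_pow (h.symm ▸ dvd_pow_self _ hd)
  have hq : q ^ d = 1 := by
    rwa [mul_pow, mul_eq_left₀ (pow_ne_zero _ (X_ne_zero i))] at h
  obtain ⟨a, -, rfl⟩ := isUnit_iff_eq_C_of_isReduced.mp (IsUnit.of_pow_eq_one hq hd)
  exact ⟨a, C_injective σ R (by rw [C_pow, hq, C_1]), mul_comm _ _⟩

theorem isHomogeneous_X_pow_pred_mul_X {σ R : Type*} [CommSemiring R] {d : ℕ} (hd : d ≠ 0)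
    (i j : σ) : (X i ^ (d - 1) * X j : MvPolynomial σ R).IsHomogeneous d := by
  simpa [Nat.sub_add_cancel (Nat.one_le_iff_ne_zero.mpr hd)] using
    (isHomogeneous_X_pow i (d - 1)).mul (isHomogeneous_X R j)

end MvPolynomial

theorem scaleAct_of_isHomogeneous {n k : ℕ} {f : MvPolynomial (Fin n) ℂ}
    (hf : f.IsHomogeneous k) (ζ : ℂ) : scaleAct n ζ f = C (ζ ^ k) * f := by
  rw [f.as_sum, map_sum, Finset.mul_sum]
  refine Finset.sum_congr rfl fun s hs => ?_
  have hdeg : ∑ i ∈ s.support, s i = k := by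
    rw [← Finsupp.degree_apply, Finsupp.degree_eq_weight_one]
    exact hf (mem_support_iff.mp hs)
  rw [scaleAct, aeval_monomial, monomial_eq, ← hdeg, ← Finset.prod_pow_eq_pow_sum, map_prod]
  simp only [Finsupp.prod, mul_pow, Finset.prod_mul_distrib, map_pow, algebraMap_eq]
  ring

theorem mem_invRing_of_isHomogeneous {n d k : ℕ} {f : MvPolynomial (Fin n) ℂ}
    (hf : f.IsHomogeneous k) (hk : d ∣ k) : f ∈ invRing n d := by
  obtain ⟨m, rfl⟩ := hk
  intro ζ hζ
  rw [scaleAct_of_isHomogeneous hf, pow_mul, hζ, one_pow, C_1, one_mul]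

theorem scalar_eq_of_fixing_invRing {n d : ℕ} (hd : d ≠ 0)
    {ψ : MvPolynomial (Fin n) ℂ →ₐ[ℂ] MvPolynomial (Fin n) ℂ}
    (hfix : ∀ f ∈ invRing n d, ψ f = f) {a : Fin n → ℂ}
    (hψ : ∀ i, ψ (X i) = C (a i) * X i)
    (i j : Fin n) (ha : a i ^ d = 1) : a j = a i := by
  have hmon :=
    hfix _ (mem_invRing_of_isHomogeneous (isHomogeneous_X_pow_pred_mul_X hd i j) dvd_rfl)
  have hprod : a i ^ (d - 1) * a j = 1 := by
    rw [map_mul, map_pow, hψ, hψ, mul_pow, ← C_pow, mul_mul_mul_comm, ← C_mul,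
      mul_eq_right₀ (mul_ne_zero (pow_ne_zero _ (X_ne_zero i)) (X_ne_zero j))] at hmon
    exact C_injective _ _ (hmon.trans C_1.symm)
  calc a j = a i ^ d * a j := by rw [ha, one_mul]
    _ = a i * (a i ^ (d - 1) * a j) := by rw [← mul_assoc, mul_pow_sub_one hd]
    _ = a i := by rw [hprod, mul_one]

theorem scalar_of_fixing_invRing_general (n d : ℕ) (hd : 1 ≤ d)
    (ψ : MvPolynomial (Fin n) ℂ ≃ₐ[ℂ] MvPolynomial (Fin n) ℂ)
    (hfix : ∀ f ∈ invRing n d, ψ f = f) :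
    ∃ ζ : ℂ, ζ ^ d = 1 ∧ ∀ i : Fin n, ψ (X i) = C ζ * X i := by
  have hd0 : d ≠ 0 := Nat.one_le_iff_ne_zero.mp hd
  have hX (i : Fin n) : ∃ a : ℂ, a ^ d = 1 ∧ ψ (X i) = C a * X i :=
    eq_C_mul_X_of_pow_eq_X_pow hd0 <| by
      rw [← map_pow, hfix _ (mem_invRing_of_isHomogeneous (isHomogeneous_X_pow i d) dvd_rfl)]
  choose a ha hψ using hX
  rcases isEmpty_or_nonempty (Fin n) with _ | ⟨⟨i₀⟩⟩
  · exact ⟨1, one_pow d, isEmptyElim⟩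
  · refine ⟨a i₀, ha i₀, fun i => ?_⟩
    rw [hψ, scalar_eq_of_fixing_invRing hd0 (ψ := ψ.toAlgHom) hfix hψ i₀ i (ha i₀)]

/-- a `ℂ`-algebra automorphism `ψ` of `ℂ[x_1,…,x_n]` commuting with the
`μ_d`-action and fixing the invariant ring pointwise is multiplication of the variables
by a single `d`-th root of unity. -/
theorem scalar_of_fixing_invRing (n d : ℕ) (hn : 2 ≤ n) (hd : 1 ≤ d)
    (ψ : MvPolynomial (Fin n) ℂ ≃ₐ[ℂ] MvPolynomial (Fin n) ℂ)
    (hcomm : ∀ ζ : ℂ, ζ ^ d = 1 → ∀ f, ψ (scaleAct n ζ f) = scaleAct n ζ (ψ f))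
    (hfix : ∀ f ∈ invRing n d, ψ f = f) :
    ∃ ζ : ℂ, ζ ^ d = 1 ∧ ∀ i : Fin n, ψ (X i) = C ζ * X i :=
  scalar_of_fixing_invRing_general n d hd ψ hfix
end

section
/- Let A be an integral domain that is a finitely generated ℂ-algebra, with field of fractions K, and let B be the integral closure of A in K. Then every locally nilpotent ℂ-derivation D of A extends to a locally nilpotent ℂ-derivation of B, i.e. there is a locally nilpotent ℂ-derivation D' of B with D'(a) = D(a) for all a ∈ A. -/
/-!
Since `D` is locally nilpotent, `exp (X • D) : A → A[X]` is a ring homomorphism, and it extends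
to the fraction fields as `K → K(X)`. An element `b` of `K` integral over `A` is sent to an element
integral over the integrally closed ring `K[X]`, hence to a polynomial `q`. For every `c ∈ ℂ`, the
value `q(c)` satisfies the integral equation of `b` twisted by `exp (c • D)`, so it is integral
over `A`, and Lagrange interpolation puts every coefficient of `q` in the integral closure `B`.
This gives `exp (X • D) : B → B[X]`. Its `X`-coefficient is a derivation `D'` of `B` extending `D`;
as `exp (X • D) (D' b)` is the `X`-derivative of `exp (X • D) b`, the iterates of `D'` kill `b`
beyond the `X`-degree of `exp (X • D) b`.
-/

open Polynomial Finset Nat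

namespace Derivation

section Semiring

variable {R A : Type*} [CommSemiring R] [CommSemiring A] [Algebra R A]

def IsLocallyNilpotent (D : Derivation R A A) : Prop := ∀ a, ∃ n : ℕ, (⇑D)^[n] a = 0

theorem iterate_map_mul (D : Derivation R A A) (n : ℕ) (a b : A) :
    (⇑D)^[n] (a * b) =
      ∑ ij ∈ antidiagonal n, n.choose ij.1 • ((⇑D)^[ij.1] a * (⇑D)^[ij.2] b) := by
  induction n with
  | zero => simp
  | succ n ih =>
    rw [sum_antidiagonal_choose_succ_nsmul (fun i j => (⇑D)^[i] a * (⇑D)^[j] b) n]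
    simp only [Function.iterate_succ_apply', ih, map_sum, map_nsmul, leibniz, smul_eq_mul,
      smul_add, sum_add_distrib]
    congr 1
    refine sum_congr rfl fun ⟨i, j⟩ hij => ?_
    rw [n.choose_symm_of_eq_add (mem_antidiagonal.1 hij).symm, mul_comm]

theorem iterate_eq_zero_of_le {D : Derivation R A A} {a : A} {m n : ℕ} (ha : (⇑D)^[m] a = 0)
    (hmn : m ≤ n) : (⇑D)^[n] a = 0 := by
  rw [← Nat.sub_add_cancel hmn, Function.iterate_add_apply, ha, iterate_map_zero]

end Semiring

variable {k A : Type*} [Field k] [CommRing A] [Algebra k A] {D : Derivation k A A}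

noncomputable def expPolynomial (hD : D.IsLocallyNilpotent) (a : A) : A[X] :=
  ∑ n ∈ range (hD a).choose, monomial n ((n ! : k)⁻¹ • (⇑D)^[n] a)

theorem coeff_expPolynomial (hD : D.IsLocallyNilpotent) (a : A) (n : ℕ) :
    (expPolynomial hD a).coeff n = (n ! : k)⁻¹ • (⇑D)^[n] a := by
  simp only [expPolynomial, finsetSum_coeff, coeff_monomial, sum_ite_eq', mem_range]
  split_ifs with hn
  · rfl
  · rw [iterate_eq_zero_of_le (hD a).choose_spec (not_lt.1 hn), smul_zero]

theorem factorial_inv_smul_iterate_algebraMap (c : k) (n : ℕ) :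
    (n ! : k)⁻¹ • (⇑D)^[n] (algebraMap k A c) = (C (algebraMap k A c)).coeff n := by
  rcases n with _ | n
  · simp
  · rw [iterate_eq_zero_of_le (m := 1) (by simp) (by omega), smul_zero, coeff_C_succ]

variable [CharZero k]

theorem factorial_inv_smul_iterate_map_mul (n : ℕ) (a b : A) :
    (n ! : k)⁻¹ • (⇑D)^[n] (a * b) = ∑ ij ∈ antidiagonal n,
      ((ij.1 ! : k)⁻¹ • (⇑D)^[ij.1] a) * ((ij.2 ! : k)⁻¹ • (⇑D)^[ij.2] b) := by
  rw [iterate_map_mul, smul_sum]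
  refine sum_congr rfl fun ⟨i, j⟩ hij => ?_
  obtain rfl : i + j = n := mem_antidiagonal.1 hij
  have hfac : ((i + j)! : k)⁻¹ * (i + j).choose i = (i ! : k)⁻¹ * (j ! : k)⁻¹ := by
    have h : ((i + j).choose i : k) * i ! * j ! = (i + j)! := by
      exact_mod_cast choose_symm_add ▸ add_choose_mul_factorial_mul_factorial i j
    have hc : ((i + j).choose i : k) ≠ 0 := by exact_mod_cast (choose_pos (le_add_right i j)).ne'
    rw [← h]
    field_simp
  rw [smul_mul_smul_comm, ← Nat.cast_smul_eq_nsmul k, smul_smul, hfac]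

/-- `exp (X • D)`. -/
noncomputable def expAlgHom (hD : D.IsLocallyNilpotent) : A →ₐ[k] A[X] where
  toFun := expPolynomial hD
  map_one' := by
    ext n
    rw [coeff_expPolynomial, ← map_one (algebraMap k A), factorial_inv_smul_iterate_algebraMap,
      map_one, map_one]
  map_mul' a b := by
    ext n
    simp only [coeff_mul, coeff_expPolynomial, factorial_inv_smul_iterate_map_mul]
  map_zero' := by
    ext n
    simp [coeff_expPolynomial]
  map_add' a b := by
    ext n
    simp [coeff_expPolynomial, iterate_map_add]
  commutes' c := by
    ext n
    rw [coeff_expPolynomial, factorial_inv_smul_iterate_algebraMap, Polynomial.algebraMap_apply]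

theorem coeff_expAlgHom (hD : D.IsLocallyNilpotent) (a : A) (n : ℕ) :
    (expAlgHom hD a).coeff n = (n ! : k)⁻¹ • (⇑D)^[n] a :=
  coeff_expPolynomial hD a n

theorem coeff_zero_expAlgHom (hD : D.IsLocallyNilpotent) (a : A) :
    (expAlgHom hD a).coeff 0 = a := by
  simp [coeff_expAlgHom]

theorem coeff_one_expAlgHom (hD : D.IsLocallyNilpotent) (a : A) :
    (expAlgHom hD a).coeff 1 = D a := by
  simp [coeff_expAlgHom]

theorem expAlgHom_apply_derivation (hD : D.IsLocallyNilpotent) (a : A) :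
    expAlgHom hD (D a) = derivative (expAlgHom hD a) := by
  ext n
  rw [coeff_derivative, coeff_expAlgHom, coeff_expAlgHom, ← Function.iterate_succ_apply,
    mul_comm, ← Nat.cast_succ, ← nsmul_eq_mul, ← Nat.cast_smul_eq_nsmul k, smul_smul,
    factorial_succ]
  push_cast
  field_simp

end Derivation

theorem Lagrange.basis_map {k K ι : Type*} [Field k] [Field K] [DecidableEq ι] (f : k →+* K)
    (s : Finset ι) (v : ι → k) (i : ι) :
    (Lagrange.basis s v i).map f = Lagrange.basis s (f ∘ v) i := by
  simp [Lagrange.basis, Lagrange.basisDivisor, Polynomial.map_prod]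

theorem Polynomial.coeff_mem_of_forall_eval_mem {k K : Type*} [Field k] [Infinite k] [Field K]
    [Algebra k K] (M : Submodule k K) {p : K[X]} (hp : ∀ c : k, p.eval (algebraMap k K c) ∈ M)
    (n : ℕ) : p.coeff n ∈ M := by
  classical
  -- Lagrange interpolation at `natDegree + 1` nodes from `k` makes each coefficient of `p` a
  -- `k`-linear combination of values of `p`.
  obtain ⟨s, hs⟩ := Infinite.exists_subset_card_eq k (p.natDegree + 1)
  have hinj : Set.InjOn (algebraMap k K) s := (algebraMap k K).injective.injOn
  have hdeg : p.degree < #s := by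
    rw [hs]
    exact_mod_cast degree_le_natDegree.trans_lt (WithBot.coe_lt_coe.2 p.natDegree.lt_succ_self)
  rw [Lagrange.eq_interpolate (v := algebraMap k K) hinj hdeg, Lagrange.interpolate_apply,
    finsetSum_coeff]
  refine sum_mem fun c _ => ?_
  have hbasis := Lagrange.basis_map (algebraMap k K) s id c
  rw [Function.comp_id] at hbasis
  rw [coeff_C_mul, ← hbasis, coeff_map, mul_comm, ← Algebra.smul_def]
  exact M.smul_mem _ (hp c)

noncomputable def AlgHom.factorThrough {R A B C : Type*} [CommSemiring R] [Semiring A]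
    [Semiring B] [Semiring C] [Algebra R A] [Algebra R B] [Algebra R C] (f : B →ₐ[R] C)
    (hf : Function.Injective f) (g : A →ₐ[R] C) (hg : ∀ a, g a ∈ f.range) : A →ₐ[R] B :=
  ((AlgEquiv.ofInjective f hf).symm : f.range →ₐ[R] B).comp (g.codRestrict f.range hg)

theorem AlgHom.apply_factorThrough {R A B C : Type*} [CommSemiring R] [Semiring A]
    [Semiring B] [Semiring C] [Algebra R A] [Algebra R B] [Algebra R C] (f : B →ₐ[R] C)
    (hf : Function.Injective f) (g : A →ₐ[R] C) (hg : ∀ a, g a ∈ f.range) (a : A) :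
    f (f.factorThrough hf g hg a) = g a :=
  congrArg Subtype.val ((AlgEquiv.ofInjective f hf).apply_symm_apply (g.codRestrict f.range hg a))

theorem Subalgebra.exists_mul_algebraMap_eq {A K : Type*} [CommRing A] [Field K] [Algebra A K]
    [IsFractionRing A K] (S : Subalgebra A K) (s : S) :
    ∃ x y : A, algebraMap A S y ≠ 0 ∧ s * algebraMap A S y = algebraMap A S x := by
  obtain ⟨⟨x, y⟩, h⟩ := IsLocalization.surj (nonZeroDivisors A) (s : K)
  refine ⟨x, y, fun hy => ?_, Subtype.ext h⟩
  exact (IsLocalization.map_units K y).ne_zero (congrArg Subtype.val hy)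

section InfinitesimalGenerator

variable {R B : Type*} [CommSemiring R] [CommRing B] [Algebra R B] (E : B →ₐ[R] B[X])
  (hE : ∀ b, (E b).coeff 0 = b)

noncomputable def AlgHom.infinitesimalGenerator : Derivation R B B :=
  Derivation.mk' ((lcoeff B 1).restrictScalars R ∘ₗ E.toLinearMap) fun a b => by
    simp [coeff_mul, Nat.antidiagonal_succ, hE, mul_comm]

theorem AlgHom.infinitesimalGenerator_apply (b : B) :
    E.infinitesimalGenerator hE b = (E b).coeff 1 := rfl

theorem AlgHom.iterate_infinitesimalGenerator_eq_zero
    (hder : ∀ b, E (E.infinitesimalGenerator hE b) = derivative (E b)) (b : B) :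
    (⇑(E.infinitesimalGenerator hE))^[(E b).natDegree + 1] b = 0 := by
  have hiter : ∀ n, E ((⇑(E.infinitesimalGenerator hE))^[n] b) = derivative^[n] (E b) := by
    intro n
    induction n with
    | zero => rfl
    | succ n ih => rw [Function.iterate_succ_apply', Function.iterate_succ_apply', hder, ih]
  rw [← hE ((⇑(E.infinitesimalGenerator hE))^[_] b), hiter,
    iterate_derivative_eq_zero (Nat.lt_succ_self _), coeff_zero]

end InfinitesimalGenerator

namespace Derivation

variable {k A K : Type*} [Field k] [CharZero k] [CommRing A] [Algebra k A] [Field K]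
  [Algebra A K] [IsFractionRing A K] [Algebra k K] [IsScalarTower k A K]
  {D : Derivation k A A} (hD : D.IsLocallyNilpotent)

local notation "S" => integralClosure A K

theorem expAlgHom_injective : Function.Injective (expAlgHom hD) :=
  fun a b h => by rw [← coeff_zero_expAlgHom hD a, h, coeff_zero_expAlgHom]

variable (K) in
noncomputable def expRatFunc : A →ₐ[k] RatFunc K :=
  (IsScalarTower.toAlgHom k K[X] (RatFunc K)).comp
    ((mapAlgHom (IsScalarTower.toAlgHom k A K)).comp (expAlgHom hD))

theorem expRatFunc_injective : Function.Injective (expRatFunc K hD) :=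
  (IsFractionRing.injective K[X] (RatFunc K)).comp <|
    (map_injective _ (IsFractionRing.injective A K)).comp (expAlgHom_injective hD)

noncomputable def expFractionRing : K →ₐ[k] RatFunc K :=
  IsFractionRing.liftAlgHom (expRatFunc_injective hD)

theorem expFractionRing_algebraMap (a : A) :
    expFractionRing hD (algebraMap A K a) =
      algebraMap K[X] (RatFunc K) ((expAlgHom hD a).map (algebraMap A K)) := by
  rw [expFractionRing, IsFractionRing.liftAlgHom_apply, IsFractionRing.lift_algebraMap]
  rfl

theorem isIntegral_expFractionRing {b : K} (hb : b ∈ S) :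
    IsIntegral K[X] (expFractionRing hD b) :=
  IsIntegral.map_of_comp_eq ((mapRingHom (algebraMap A K)).comp (expAlgHom hD).toRingHom)
    (expFractionRing hD).toRingHom
    (RingHom.ext fun a => (expFractionRing_algebraMap hD a).symm) hb

variable (K) in
noncomputable def expOnIntegralClosure : S →ₐ[k] K[X] :=
  (IsScalarTower.toAlgHom k K[X] (RatFunc K)).factorThrough
    (IsFractionRing.injective K[X] (RatFunc K))
    ((expFractionRing hD).comp (IsScalarTower.toAlgHom k S K)) fun b => by
      obtain ⟨p, hp⟩ := IsIntegrallyClosed.isIntegral_iff.1 (isIntegral_expFractionRing hD b.2)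
      exact ⟨p, hp⟩

theorem algebraMap_expOnIntegralClosure (b : S) :
    algebraMap K[X] (RatFunc K) (expOnIntegralClosure K hD b) = expFractionRing hD (b : K) :=
  AlgHom.apply_factorThrough (IsScalarTower.toAlgHom k K[X] (RatFunc K)) _ _ _ b

theorem expOnIntegralClosure_algebraMap (a : A) :
    expOnIntegralClosure K hD (algebraMap A S a) =
      (expAlgHom hD a).map (algebraMap A K) :=
  IsFractionRing.injective K[X] (RatFunc K) <| by
    rw [algebraMap_expOnIntegralClosure, ← expFractionRing_algebraMap]
    rfl

theorem isIntegral_eval_expOnIntegralClosure (b : S) (c : k) :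
    IsIntegral A ((expOnIntegralClosure K hD b).eval (algebraMap k K c)) := by
  refine IsIntegral.map_of_comp_eq
    ((evalRingHom (algebraMap k A c)).comp (expAlgHom hD).toRingHom)
    ((evalRingHom (algebraMap k K c)).comp (expOnIntegralClosure K hD).toRingHom)
    (RingHom.ext fun a => ?_) (integralClosure.isIntegral b)
  simp [expOnIntegralClosure_algebraMap, eval_map, IsScalarTower.algebraMap_apply k A K,
    eval₂_at_apply]

theorem coeff_expOnIntegralClosure_mem (b : S) (n : ℕ) :
    (expOnIntegralClosure K hD b).coeff n ∈ S :=
  coeff_mem_of_forall_eval_mem ((integralClosure A K).toSubmodule.restrictScalars k)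
    (isIntegral_eval_expOnIntegralClosure hD b) n

variable (K) in
noncomputable def expIntegralClosure : S →ₐ[k] S[X] :=
  (mapAlgHom (IsScalarTower.toAlgHom k S K)).factorThrough
    (map_injective _ Subtype.val_injective) (expOnIntegralClosure K hD) fun b => by
      have hlifts : expOnIntegralClosure K hD b ∈ lifts (algebraMap S K) :=
        (lifts_iff_coeff_lifts _).2 fun n => ⟨⟨_, coeff_expOnIntegralClosure_mem hD b n⟩, rfl⟩
      obtain ⟨q, hq⟩ := (mem_lifts _).1 hlifts
      exact ⟨q, hq⟩

theorem map_expIntegralClosure (b : S) :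
    (expIntegralClosure K hD b).map (algebraMap S K) = expOnIntegralClosure K hD b :=
  AlgHom.apply_factorThrough (mapAlgHom (IsScalarTower.toAlgHom k S K)) _ _ _ b

theorem expIntegralClosure_algebraMap (a : A) :
    expIntegralClosure K hD (algebraMap A S a) = (expAlgHom hD a).map (algebraMap A S) :=
  map_injective _ Subtype.val_injective <| by
    rw [map_expIntegralClosure, expOnIntegralClosure_algebraMap, Polynomial.map_map,
      ← IsScalarTower.algebraMap_eq]

theorem coeff_zero_expIntegralClosure (b : S) : (expIntegralClosure K hD b).coeff 0 = b := by
  obtain ⟨x, y, hy, hxy⟩ := Subalgebra.exists_mul_algebraMap_eq _ b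
  refine mul_right_cancel₀ hy ?_
  have h := congrArg (fun b => (expIntegralClosure K hD b).coeff 0) hxy
  simp only [map_mul, mul_coeff_zero, expIntegralClosure_algebraMap, coeff_map,
    coeff_zero_expAlgHom] at h
  exact h.trans hxy.symm

variable (K) in
noncomputable def extendToIntegralClosure : Derivation k S S :=
  (expIntegralClosure K hD).infinitesimalGenerator (coeff_zero_expIntegralClosure hD)

theorem extendToIntegralClosure_algebraMap (a : A) :
    extendToIntegralClosure K hD (algebraMap A S a) = algebraMap A S (D a) := by
  rw [extendToIntegralClosure, AlgHom.infinitesimalGenerator_apply,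
    expIntegralClosure_algebraMap, coeff_map, coeff_one_expAlgHom]

theorem expIntegralClosure_extendToIntegralClosure (b : S) :
    expIntegralClosure K hD (extendToIntegralClosure K hD b) =
      derivative (expIntegralClosure K hD b) := by
  -- Apply `E ∘ δ` and `derivative ∘ E` to `b * y = x`: they agree on `x, y ∈ A`, and `E y ≠ 0`.
  set E := expIntegralClosure K hD
  set δ := extendToIntegralClosure K hD
  have hA : ∀ a, E (δ (algebraMap A S a)) = derivative (E (algebraMap A S a)) := fun a => by
    rw [extendToIntegralClosure_algebraMap, expIntegralClosure_algebraMap,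
      expIntegralClosure_algebraMap, expAlgHom_apply_derivation, derivative_map]
  obtain ⟨x, y, hy, hxy⟩ := Subalgebra.exists_mul_algebraMap_eq _ b
  have hEy : E (algebraMap A S y) ≠ 0 := fun h => hy <| by
    rw [← coeff_zero_expIntegralClosure hD (algebraMap A S y), h, coeff_zero]
  have hδ := congrArg (fun s => E (δ s)) hxy
  have hderiv := congrArg (fun s => derivative (E s)) hxy
  simp only [leibniz, smul_eq_mul, map_add, map_mul, derivative_mul, hA] at hδ hderiv
  refine mul_left_cancel₀ hEy ?_
  linear_combination hδ - hderiv

theorem iterate_extendToIntegralClosure_eq_zero (b : S) :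
    (⇑(extendToIntegralClosure K hD))^[(expIntegralClosure K hD b).natDegree + 1] b = 0 :=
  AlgHom.iterate_infinitesimalGenerator_eq_zero _ _
    (expIntegralClosure_extendToIntegralClosure (K := K) hD) b

end Derivation

theorem lnd_extends_to_integralClosure_general (A : Type*) [CommRing A] [Algebra ℂ A]
    (K : Type*) [Field K] [Algebra A K] [IsFractionRing A K]
    [Algebra ℂ K] [IsScalarTower ℂ A K]
    (D : Derivation ℂ A A) (hD : ∀ a : A, ∃ m : ℕ, 1 ≤ m ∧ (⇑D)^[m] a = 0) :
    ∃ D' : Derivation ℂ (Subalgebra.restrictScalars ℂ (integralClosure A K))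
        (Subalgebra.restrictScalars ℂ (integralClosure A K)),
      (∀ b, ∃ m : ℕ, 1 ≤ m ∧ (⇑D')^[m] b = 0) ∧
      (∀ a : A,
        (↑(D' ⟨algebraMap A K a,
            (Subalgebra.mem_restrictScalars ℂ).mpr
              ((integralClosure A K).algebraMap_mem a)⟩) : K) =
          algebraMap A K (D a)) := by
  have hD' : D.IsLocallyNilpotent := fun a => (hD a).imp fun _ h => h.2
  refine ⟨Derivation.extendToIntegralClosure K hD', fun b => ⟨_, Nat.succ_pos _,
    Derivation.iterate_extendToIntegralClosure_eq_zero hD' b⟩, fun a => ?_⟩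
  exact congrArg Subtype.val (Derivation.extendToIntegralClosure_algebraMap hD' a)

/-- let `A` be a domain that is a finitely generated `ℂ`-algebra with
fraction field `K`, and let `B` be the integral closure of `A` in `K`. Every locally
nilpotent `ℂ`-derivation `D` of `A` extends to a locally nilpotent `ℂ`-derivation of `B`. -/
theorem lnd_extends_to_integralClosure (A : Type*) [CommRing A] [IsDomain A] [Algebra ℂ A]
    (hfg : Algebra.FiniteType ℂ A)
    (K : Type*) [Field K] [Algebra A K] [IsFractionRing A K]
    [Algebra ℂ K] [IsScalarTower ℂ A K]
    (D : Derivation ℂ A A) (hD : ∀ a : A, ∃ m : ℕ, 1 ≤ m ∧ (⇑D)^[m] a = 0) :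
    ∃ D' : Derivation ℂ (Subalgebra.restrictScalars ℂ (integralClosure A K))
        (Subalgebra.restrictScalars ℂ (integralClosure A K)),
      (∀ b, ∃ m : ℕ, 1 ≤ m ∧ (⇑D')^[m] b = 0) ∧
      (∀ a : A,
        (↑(D' ⟨algebraMap A K a,
            (Subalgebra.mem_restrictScalars ℂ).mpr
              ((integralClosure A K).algebraMap_mem a)⟩) : K) =
          algebraMap A K (D a)) :=
  lnd_extends_to_integralClosure_general A K D hD
end

section
/- Let n ≥ 2, d ≥ 1 and s ≥ 1, and set R = ℂ[x_1,…,x_n]^{μ_d} = ⊕_{k≥0} ℂ[x_1,…,x_n]_{dk} and R_s = ℂ ⊕ ⊕_{k≥s} ℂ[x_1,…,x_n]_{dk}. Then R_s is a ℂ-subalgebra of R, the extension R_s ⊆ R is integral, R_s and R have the same field of fractions, and R is integrally closed in this field; consequently R is the integral closure of R_s in its field of fractions (geometrically, the induced morphism A_{d,n} → A_{d,n}^s is the normalization). -/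
open MvPolynomial

/-- The underlying set of `R_s = ℂ ⊕ ⊕_{k≥s} ℂ[x_1,…,x_n]_{dk}`: polynomials all of whose
nonzero homogeneous components have degree `0` or degree `dk` with `k ≥ s`. -/
def RsSet (n d s : ℕ) : Set (MvPolynomial (Fin n) ℂ) :=
  {f | ∀ m : ℕ, homogeneousComponent m f ≠ 0 → m = 0 ∨ (d ∣ m ∧ d * s ≤ m)}

/-!
Both rings are spanned by monomials and are cut out by a condition on the total degree: `R` by
the degrees in `dℕ`, `R_s` by those in `{0} ∪ (dℕ ∩ [ds, ∞))`. Every monomial `m` of `R` has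
`m ^ s ∈ R_s`, so `R` is integral over `R_s`, and `x₁ ^ (ds) · R ⊆ R_s`, so both rings have the
same fractions. Finally, `R` is the ring of `μ_d`-invariants of the integrally closed domain
`ℂ[x_1,…,x_n]`: an element of `Frac R` integral over `R` is a polynomial `c` with `c * b = a`
for invariants `a, b ≠ 0`, and cancelling `b` shows that `c` is invariant.
-/

attribute [local instance] FractionRing.liftAlgebra in
theorem Subalgebra.isIntegrallyClosed_of_mul_mem {R P : Type*} [CommRing R] [CommRing P]
    [IsDomain P] [IsIntegrallyClosed P] [Algebra R P] (A : Subalgebra R P)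
    (h : ∀ b c : P, b ∈ A → b ≠ 0 → c * b ∈ A → c ∈ A) : IsIntegrallyClosed A := by
  let L := FractionRing P
  have hmap (y : A) : algebraMap (FractionRing A) L (algebraMap A _ y) = algebraMap P L y := by
    rw [← IsScalarTower.algebraMap_apply, IsScalarTower.algebraMap_apply A P L]
    rfl
  rw [isIntegrallyClosed_iff (FractionRing A)]
  intro x hx
  obtain ⟨a, b, hb, rfl⟩ := IsFractionRing.div_surjective (A := A) x
  have hb0 : (b : P) ≠ 0 := by simpa using nonZeroDivisors.ne_zero hb
  have hx' := (hx.map (IsScalarTower.toAlgHom A (FractionRing A) L)).tower_top (A := P)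
  simp only [IsScalarTower.coe_toAlgHom', map_div₀, hmap] at hx'
  obtain ⟨c, hc⟩ := IsIntegrallyClosed.isIntegral_iff.mp hx'
  have hcb : c * b = a := by
    apply IsFractionRing.injective P L
    rwa [map_mul, ← eq_div_iff (by simpa using hb0)]
  refine ⟨⟨c, h b c b.2 hb0 (hcb ▸ a.2)⟩, (algebraMap (FractionRing A) L).injective ?_⟩
  simpa only [map_div₀, hmap] using hc

namespace MvPolynomial

section CommSemiring

variable {σ R : Type*} [CommSemiring R]

def degreeSubalgebra (M : AddSubmonoid ℕ) : Subalgebra R (MvPolynomial σ R) where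
  carrier := {f | ∀ u ∈ f.support, u.degree ∈ M}
  mul_mem' {f g} hf hg u hu := by
    classical
    obtain ⟨v, hv, w, hw, rfl⟩ := Finset.mem_add.mp (support_mul f g hu)
    rw [map_add]
    exact add_mem (hf v hv) (hg w hw)
  add_mem' {f g} hf hg u hu := by
    classical
    exact (Finset.mem_union.mp (support_add hu)).elim (hf u) (hg u)
  algebraMap_mem' c u hu := by
    classical
    rw [Finset.mem_singleton.mp (support_monomial_subset hu), map_zero]
    exact zero_mem M

variable {M N : AddSubmonoid ℕ} {f : MvPolynomial σ R}

theorem mem_degreeSubalgebra : f ∈ degreeSubalgebra M ↔ ∀ u ∈ f.support, u.degree ∈ M :=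
  Iff.rfl

theorem homogeneousComponent_ne_zero_iff {m : ℕ} :
    homogeneousComponent m f ≠ 0 ↔ ∃ u ∈ f.support, u.degree = m := by
  rw [ne_eq, ← support_eq_empty, ← ne_eq, ← Finset.nonempty_iff_ne_empty,
    support_homogeneousComponent, Finset.filter_nonempty_iff]

theorem mem_degreeSubalgebra_iff_homogeneousComponent :
    f ∈ degreeSubalgebra M ↔ ∀ m, homogeneousComponent m f ≠ 0 → m ∈ M := by
  simp only [mem_degreeSubalgebra, homogeneousComponent_ne_zero_iff, forall_exists_index,
    and_imp]
  exact ⟨fun h _ u hu hm => hm ▸ h u hu, fun h u hu => h _ u hu rfl⟩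

theorem degreeSubalgebra_mono (h : M ≤ N) :
    (degreeSubalgebra M : Subalgebra R (MvPolynomial σ R)) ≤ degreeSubalgebra N :=
  fun _ hf u hu => h (hf u hu)

theorem monomial_mem_degreeSubalgebra {u : σ →₀ ℕ} (hu : u.degree ∈ M) (c : R) :
    monomial u c ∈ degreeSubalgebra M := fun _ hv => by
  classical
  rwa [Finset.mem_singleton.mp (support_monomial_subset hv)]

theorem X_pow_mul_mem_degreeSubalgebra (i : σ) {k : ℕ} (h : ∀ m ∈ M, k + m ∈ N)
    (hf : f ∈ degreeSubalgebra M) : X i ^ k * f ∈ degreeSubalgebra N := by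
  classical
  intro u hu
  rw [X_pow_eq_monomial] at hu
  obtain ⟨v, hv, w, hw, rfl⟩ := Finset.mem_add.mp (support_mul _ f hu)
  rw [Finset.mem_singleton.mp (support_monomial_subset hv), map_add, Finsupp.degree_single]
  exact h _ (hf w hw)

end CommSemiring

theorem isIntegral_of_mem_degreeSubalgebra {σ R : Type*} [CommRing R] {M N : AddSubmonoid ℕ}
    {s : ℕ} (hs : s ≠ 0) (h : ∀ m ∈ M, s * m ∈ N) {f : MvPolynomial σ R}
    (hf : f ∈ degreeSubalgebra M) :
    IsIntegral (degreeSubalgebra N : Subalgebra R (MvPolynomial σ R)) f := by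
  rw [f.as_sum]
  refine IsIntegral.sum _ fun u hu => IsIntegral.of_pow (Nat.pos_of_ne_zero hs) ?_
  rw [monomial_pow]
  have hmem : monomial (s • u) (coeff u f ^ s) ∈
      (degreeSubalgebra N : Subalgebra R (MvPolynomial σ R)) :=
    monomial_mem_degreeSubalgebra (by simpa only [map_nsmul, smul_eq_mul] using h _ (hf u hu)) _
  exact isIntegral_algebraMap (R := degreeSubalgebra N) (x := ⟨_, hmem⟩)

end MvPolynomial

theorem Nat.mem_multiples_iff_dvd {d m : ℕ} : m ∈ AddSubmonoid.multiples d ↔ d ∣ m := by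
  simp [AddSubmonoid.mem_multiples_iff, dvd_def, eq_comm, mul_comm]

def rsDegrees (d s : ℕ) : AddSubmonoid ℕ where
  carrier := {m | m = 0 ∨ d ∣ m ∧ d * s ≤ m}
  zero_mem' := Or.inl rfl
  add_mem' := by
    rintro a b (rfl | ha) (rfl | hb)
    · exact Or.inl rfl
    · rw [zero_add]; exact Or.inr hb
    · rw [add_zero]; exact Or.inr ha
    · exact Or.inr ⟨dvd_add ha.1 hb.1, by omega⟩

theorem rsDegrees_le_multiples (d s : ℕ) : rsDegrees d s ≤ AddSubmonoid.multiples d := by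
  rintro m (rfl | ⟨hm, -⟩)
  exacts [zero_mem _, Nat.mem_multiples_iff_dvd.mpr hm]

theorem mul_mem_rsDegrees {d s m : ℕ} (hm : m ∈ AddSubmonoid.multiples d) :
    s * m ∈ rsDegrees d s := by
  obtain ⟨k, rfl⟩ := Nat.mem_multiples_iff_dvd.mp hm
  rcases Nat.eq_zero_or_pos k with rfl | hk
  · exact Or.inl (by simp)
  · refine Or.inr ⟨(dvd_mul_right d k).mul_left s, ?_⟩
    calc d * s ≤ d * s * k := Nat.le_mul_of_pos_right _ hk
      _ = s * (d * k) := by ring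

theorem add_mem_rsDegrees {d s m : ℕ} (hm : m ∈ AddSubmonoid.multiples d) :
    d * s + m ∈ rsDegrees d s :=
  Or.inr ⟨dvd_add (dvd_mul_right d s) (Nat.mem_multiples_iff_dvd.mp hm), Nat.le_add_right _ _⟩

theorem scaleAct_monomial (n : ℕ) (ζ : ℂ) (u : Fin n →₀ ℕ) (c : ℂ) :
    scaleAct n ζ (monomial u c) = monomial u (ζ ^ u.degree * c) := by
  rw [scaleAct, aeval_monomial, monomial_eq, Finsupp.degree_apply, Finsupp.prod, Finsupp.prod]
  simp only [mul_pow, Finset.prod_mul_distrib, Finset.prod_pow_eq_pow_sum, C_pow, C_mul,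
    algebraMap_eq]
  ring

theorem coeff_scaleAct (n : ℕ) (ζ : ℂ) (f : MvPolynomial (Fin n) ℂ) (u : Fin n →₀ ℕ) :
    coeff u (scaleAct n ζ f) = ζ ^ u.degree * coeff u f := by
  induction f using MvPolynomial.induction_on' with
  | monomial v c =>
    rw [scaleAct_monomial, coeff_monomial, coeff_monomial]
    split_ifs with h
    · rw [h]
    · rw [mul_zero]
  | add f g hf hg => rw [map_add, coeff_add, coeff_add, hf, hg, mul_add]

theorem invRing_eq_degreeSubalgebra {n d : ℕ} (hd : d ≠ 0) :
    invRing n d = degreeSubalgebra (AddSubmonoid.multiples d) := by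
  obtain ⟨ζ, hζ⟩ : ∃ ζ : ℂ, IsPrimitiveRoot ζ d :=
    ⟨_, Complex.isPrimitiveRoot_exp d hd⟩
  ext f
  simp only [mem_degreeSubalgebra, Nat.mem_multiples_iff_dvd]
  refine ⟨fun hf u hu => ?_, fun h ξ hξ => ?_⟩
  · have hcoeff := congrArg (coeff u) (hf ζ hζ.pow_eq_one)
    rw [coeff_scaleAct] at hcoeff
    exact (hζ.pow_eq_one_iff_dvd _).mp
      ((mul_left_eq_self₀.mp hcoeff).resolve_right (mem_support_iff.mp hu))
  · ext u
    rw [coeff_scaleAct]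
    by_cases hu : u ∈ f.support
    · obtain ⟨k, hk⟩ := h u hu
      rw [hk, pow_mul, hξ, one_pow, one_mul]
    · rw [notMem_support_iff.mp hu, mul_zero]

theorem mem_invRing_of_mul_mem {n d : ℕ} {b c : MvPolynomial (Fin n) ℂ} (hb : b ∈ invRing n d)
    (hb0 : b ≠ 0) (hcb : c * b ∈ invRing n d) : c ∈ invRing n d := fun ζ hζ =>
  mul_right_cancel₀ hb0 (by rw [← hcb ζ hζ, map_mul, hb ζ hζ])

/-- `R_s = ℂ ⊕ ⊕_{k≥s} ℂ[x_1,…,x_n]_{dk}` is a `ℂ`-subalgebra of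
`R = ℂ[x_1,…,x_n]^{μ_d}`, the extension `R_s ⊆ R` is integral, `R_s` and `R` have the same
field of fractions, and `R` is integrally closed; hence `R` is the integral closure of
`R_s` in its field of fractions. -/
theorem invRing_is_normalization_of_Rs (n d s : ℕ) (hn : 2 ≤ n) (hd : 1 ≤ d) (hs : 1 ≤ s) :
    ∃ B : Subalgebra ℂ (MvPolynomial (Fin n) ℂ),
      (B : Set (MvPolynomial (Fin n) ℂ)) = RsSet n d s ∧
      B ≤ invRing n d ∧
      (∀ f ∈ invRing n d, IsIntegral B f) ∧
      (∀ f ∈ invRing n d, ∃ p ∈ B, ∃ q ∈ B, q ≠ 0 ∧ q * f = p) ∧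
      IsIntegrallyClosed (invRing n d) := by
  have hR : invRing n d = degreeSubalgebra (AddSubmonoid.multiples d) :=
    invRing_eq_degreeSubalgebra (by omega)
  let i : Fin n := ⟨0, by omega⟩
  refine ⟨degreeSubalgebra (rsDegrees d s),
    Set.ext fun _ => mem_degreeSubalgebra_iff_homogeneousComponent, ?_, fun f hf => ?_,
    fun f hf => ?_, (invRing n d).isIntegrallyClosed_of_mul_mem fun _ _ => mem_invRing_of_mul_mem⟩
  · exact hR ▸ degreeSubalgebra_mono (rsDegrees_le_multiples d s)
  · exact isIntegral_of_mem_degreeSubalgebra (by omega) (fun _ => mul_mem_rsDegrees) (hR ▸ hf)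
  · have hX : X i ^ (d * s) ∈
        (degreeSubalgebra (rsDegrees d s) : Subalgebra ℂ (MvPolynomial (Fin n) ℂ)) := by
      simpa using X_pow_mul_mem_degreeSubalgebra i (fun _ => add_mem_rsDegrees)
        (one_mem (degreeSubalgebra (AddSubmonoid.multiples d)))
    exact ⟨_, X_pow_mul_mem_degreeSubalgebra i (fun _ => add_mem_rsDegrees) (hR ▸ hf), _, hX,
      pow_ne_zero _ (X_ne_zero i), rfl⟩
end

section
/- Let d ≥ 1, let l ≥ 1, and let d_1,…,d_l and k_1,…,k_l be positive integers with d ∣ d_i for all i. Let S ⊆ ℕ be the additive submonoid generated by the set {k·d_i : 1 ≤ i ≤ l, k ≥ k_i}, and suppose that for every i and every k ≥ 1 one has k_i·d_i + k·d ∈ S. Then S = {0} ∪ {m ∈ ℕ : d ∣ m and m ≥ min_i (k_i·d_i)}. -/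
variable {ι : Type*}

def multiplesAbove (d : ℕ) (c : ι → ℕ) : AddSubmonoid ℕ where
  carrier := {0} ∪ {m | d ∣ m ∧ ∃ i, c i ≤ m}
  zero_mem' := Or.inl rfl
  add_mem' := by
    rintro a b (rfl | ⟨hda, i, hia⟩) hb
    · simpa using hb
    rcases hb with rfl | ⟨hdb, -⟩
    · simpa using Or.inr ⟨hda, i, hia⟩
    · exact Or.inr ⟨dvd_add hda hdb, i, hia.trans (Nat.le_add_right a b)⟩

lemma Nat.exists_eq_add_mul_of_dvd_of_le {d a m : ℕ} (ha : d ∣ a) (hm : d ∣ m) (hle : a ≤ m) :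
    ∃ k, m = a + k * d := by
  obtain ⟨k, hk⟩ := Nat.dvd_sub hm ha
  exact ⟨k, by rw [mul_comm, ← hk, Nat.add_sub_cancel' hle]⟩

lemma multiplesAbove_le {d : ℕ} {c : ι → ℕ} {S : AddSubmonoid ℕ} (hc : ∀ i, d ∣ c i)
    (h : ∀ i k, c i + k * d ∈ S) : multiplesAbove d c ≤ S := by
  rintro m (rfl | ⟨hdm, i, him⟩)
  · exact S.zero_mem
  · obtain ⟨k, rfl⟩ := Nat.exists_eq_add_mul_of_dvd_of_le (hc i) hdm him
    exact h i k

theorem degree_monoid_eq_general (d l : ℕ)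
    (ds ks : Fin l → ℕ)
    (hdvd : ∀ i, d ∣ ds i)
    (S : AddSubmonoid ℕ)
    (hS : S = AddSubmonoid.closure {m : ℕ | ∃ (i : Fin l) (k : ℕ), ks i ≤ k ∧ m = k * ds i})
    (hplus : ∀ (i : Fin l) (k : ℕ), 1 ≤ k → ks i * ds i + k * d ∈ S) :
    (S : Set ℕ) = {0} ∪ {m : ℕ | d ∣ m ∧ ∃ i : Fin l, ks i * ds i ≤ m} := by
  have hgen : ∀ i k, ks i ≤ k → k * ds i ∈ S := fun i k hk ↦
    hS ▸ AddSubmonoid.subset_closure ⟨i, k, hk, rfl⟩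
  have hS_le : S ≤ multiplesAbove d (fun i ↦ ks i * ds i) := by
    rw [hS, AddSubmonoid.closure_le]
    rintro _ ⟨i, k, hk, rfl⟩
    exact Or.inr ⟨(hdvd i).mul_left k, i, Nat.mul_le_mul_right _ hk⟩
  have hle_S : multiplesAbove d (fun i ↦ ks i * ds i) ≤ S := by
    refine multiplesAbove_le (fun i ↦ (hdvd i).mul_left _) fun i k ↦ ?_
    rcases Nat.eq_zero_or_pos k with rfl | hk
    · simpa using hgen i (ks i) le_rfl
    · exact hplus i k hk
  exact congrArg SetLike.coe (le_antisymm hS_le hle_S)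

/-- let `d ∣ d_i`, and let `S ⊆ ℕ` be the additive submonoid generated by
`{k·d_i : k ≥ k_i}`; if moreover `k_i·d_i + k·d ∈ S` for all `i` and all `k ≥ 1`, then
`S = {0} ∪ {m : d ∣ m and m ≥ min_i k_i·d_i}`. -/
theorem degree_monoid_eq (d l : ℕ) (hd : 1 ≤ d) (hl : 1 ≤ l)
    (ds ks : Fin l → ℕ) (hds : ∀ i, 1 ≤ ds i) (hks : ∀ i, 1 ≤ ks i)
    (hdvd : ∀ i, d ∣ ds i)
    (S : AddSubmonoid ℕ)
    (hS : S = AddSubmonoid.closure {m : ℕ | ∃ (i : Fin l) (k : ℕ), ks i ≤ k ∧ m = k * ds i})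
    (hplus : ∀ (i : Fin l) (k : ℕ), 1 ≤ k → ks i * ds i + k * d ∈ S) :
    (S : Set ℕ) = {0} ∪ {m : ℕ | d ∣ m ∧ ∃ i : Fin l, ks i * ds i ≤ m} :=
  degree_monoid_eq_general d l ds ks hdvd S hS hplus
end
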